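/- arXiv:1407.1268 — 4 statements merged into one kernel-verified Lean document; each statement's English description precedes it below -/
import Mathlib

section
/- Let U be a symmetric n×n matrix such that span{p₀,…,p_{k-2}} ⊆ null(U) (equivalently Upᵢ = 0 for i ≤ k-2) where span{p₀,…,p_{k-2}} = 𝒦_{k-1}(p₀,H), and range(U) ⊆ 𝒦_{k+1}(p₀,H). Then range(U) ⊆ 𝒦_{k-1}(p₀,H)^⊥ ∩ 𝒦_{k+1}(p₀,H) and rank(U) ≤ 2. -/
open Matrix

/-- The Krylov subspace `𝒦_k(b,H) = span{b, Hb, …, H^{k-1}b}`. -/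
def krylov {n : ℕ} (b : Fin n → ℝ) (H : Matrix (Fin n) (Fin n) ℝ) (k : ℕ) :
    Submodule ℝ (Fin n → ℝ) :=
  Submodule.span ℝ (Set.range fun i : Fin k => (H ^ (i : ℕ)) *ᵥ b)

/-!
A symmetric `U` that kills `𝒦_{k-1}` has its range orthogonal to `𝒦_{k-1}`, hence meeting it
only in `0`. Both sit inside `𝒦_{k+1}`, which is spanned by `𝒦_{k-1}` and two more vectors, so
`rank U + dim 𝒦_{k-1} ≤ dim 𝒦_{k+1} ≤ dim 𝒦_{k-1} + 2`.
-/

theorem Submodule.finrank_add_finrank_le_of_disjoint_of_le {K V : Type*} [DivisionRing K]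
    [AddCommGroup V] [Module K V] [FiniteDimensional K V] {s t u : Submodule K V}
    (hst : Disjoint s t) (hs : s ≤ u) (ht : t ≤ u) :
    Module.finrank K s + Module.finrank K t ≤ Module.finrank K u := by
  rw [← finrank_sup_add_finrank_inf_eq, hst.eq_bot, finrank_bot, add_zero]
  exact finrank_mono (sup_le hs ht)

theorem Submodule.disjoint_of_forall_dotProduct_eq_zero {ι R : Type*} [Fintype ι] [Ring R]
    [LinearOrder R] [IsStrictOrderedRing R] {s t : Submodule R (ι → R)}
    (h : ∀ x ∈ s, ∀ y ∈ t, x ⬝ᵥ y = 0) :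
    Disjoint s t :=
  Submodule.disjoint_def.mpr fun x hxs hxt => dotProduct_self_eq_zero.mp (h x hxs x hxt)

theorem Matrix.IsSymm.mulVec_dotProduct_eq_zero {ι R : Type*} [Fintype ι] [CommSemiring R]
    {A : Matrix ι ι R} (hA : A.IsSymm) (x : ι → R) {z : ι → R} (hz : A *ᵥ z = 0) :
    (A *ᵥ x) ⬝ᵥ z = 0 := by
  rw [dotProduct_comm, dotProduct_mulVec, ← mulVec_transpose, hA.eq, hz, zero_dotProduct]

section Krylov

variable {n : ℕ} (b : Fin n → ℝ) (H : Matrix (Fin n) (Fin n) ℝ)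

theorem krylov_mono {j j' : ℕ} (h : j ≤ j') : krylov b H j ≤ krylov b H j' :=
  Submodule.span_mono <| Set.range_subset_iff.mpr fun i => ⟨⟨i, by omega⟩, rfl⟩

theorem krylov_add_le (j m : ℕ) :
    krylov b H (j + m) ≤
      krylov b H j ⊔ Submodule.span ℝ (Set.range fun i : Fin m => (H ^ (j + i : ℕ)) *ᵥ b) := by
  refine Submodule.span_le.mpr <| Set.range_subset_iff.mpr fun i => ?_
  rcases lt_or_ge (i : ℕ) j with hi | hi
  · exact Submodule.mem_sup_left <| Submodule.subset_span ⟨⟨i, hi⟩, rfl⟩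
  · refine Submodule.mem_sup_right <| Submodule.subset_span ⟨⟨i - j, by omega⟩, ?_⟩
    simp only [Nat.add_sub_cancel' hi]

theorem finrank_krylov_add_le (j m : ℕ) :
    Module.finrank ℝ (krylov b H (j + m)) ≤ Module.finrank ℝ (krylov b H j) + m := by
  refine (Submodule.finrank_mono (krylov_add_le b H j m)).trans <|
    (Submodule.finrank_add_le_finrank_add_finrank _ _).trans ?_
  exact Nat.add_le_add_left ((finrank_range_le_card _).trans_eq (Fintype.card_fin m)) _

end Krylov

theorem range_in_perp_and_rank_le_two_general {n k : ℕ}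
    (H : Matrix (Fin n) (Fin n) ℝ) (p₀ : Fin n → ℝ)
    (p : ℕ → Fin n → ℝ)
    (hspan : Submodule.span ℝ (Set.range fun i : Fin (k - 1) => p (i : ℕ)) =
      krylov p₀ H (k - 1))
    (U : Matrix (Fin n) (Fin n) ℝ) (hUsymm : U.IsSymm)
    (hnull : ∀ i, i ≤ k - 2 → U *ᵥ p i = 0)
    (hrange : LinearMap.range U.mulVecLin ≤ krylov p₀ H (k + 1)) :
    (∀ y ∈ LinearMap.range U.mulVecLin,
      y ∈ krylov p₀ H (k + 1) ∧ ∀ z ∈ krylov p₀ H (k - 1), y ⬝ᵥ z = 0) ∧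
    U.rank ≤ 2 := by
  have hker : krylov p₀ H (k - 1) ≤ LinearMap.ker U.mulVecLin := by
    rw [← hspan, Submodule.span_le, Set.range_subset_iff]
    exact fun i => hnull i (by omega)
  have horth : ∀ y ∈ LinearMap.range U.mulVecLin, ∀ z ∈ krylov p₀ H (k - 1), y ⬝ᵥ z = 0 := by
    rintro _ ⟨x, rfl⟩ z hz
    exact hUsymm.mulVec_dotProduct_eq_zero x (hker hz)
  refine ⟨fun y hy => ⟨hrange hy, horth y hy⟩, ?_⟩
  have hsum := Submodule.finrank_add_finrank_le_of_disjoint_of_le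
    (Submodule.disjoint_of_forall_dotProduct_eq_zero horth) hrange (krylov_mono p₀ H (by omega))
  have hgrowth := (Submodule.finrank_mono (krylov_mono p₀ H (by omega : k + 1 ≤ k - 1 + 2))).trans
    (finrank_krylov_add_le p₀ H (k - 1) 2)
  change Module.finrank ℝ (LinearMap.range U.mulVecLin) ≤ 2
  omega

/-- If a symmetric update matrix `U` annihilates `p₀,…,p_{k-2}` (which span
`𝒦_{k-1}(p₀,H)`) and has range in `𝒦_{k+1}(p₀,H)`, then its range lies in
`𝒦_{k-1}(p₀,H)^⊥ ∩ 𝒦_{k+1}(p₀,H)` and `rank(U) ≤ 2`. -/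
theorem range_in_perp_and_rank_le_two {n k : ℕ} (hk : 2 ≤ k)
    (H : Matrix (Fin n) (Fin n) ℝ) (p₀ : Fin n → ℝ)
    (p : ℕ → Fin n → ℝ) (hp0 : p 0 = p₀)
    (hspan : Submodule.span ℝ (Set.range fun i : Fin (k - 1) => p (i : ℕ)) =
      krylov p₀ H (k - 1))
    (hdim : ∀ j, j ≤ k + 1 → Module.finrank ℝ (krylov p₀ H j) = j)
    (U : Matrix (Fin n) (Fin n) ℝ) (hUsymm : U.IsSymm)
    (hnull : ∀ i, i ≤ k - 2 → U *ᵥ p i = 0)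
    (hrange : LinearMap.range U.mulVecLin ≤ krylov p₀ H (k + 1)) :
    (∀ y ∈ LinearMap.range U.mulVecLin,
      y ∈ krylov p₀ H (k + 1) ∧ ∀ z ∈ krylov p₀ H (k - 1), y ⬝ᵥ z = 0) ∧
    U.rank ≤ 2 :=
  range_in_perp_and_rank_le_two_general H p₀ p hspan U hUsymm hnull hrange
end

section
/- Let Hp and Bp be linearly independent vectors with pᵀHp ≠ 0 and pᵀBp ≠ 0, and let U = (a b) M (a b)ᵀ with a = Hp/(pᵀHp), b = Bp/(pᵀBp) and M a symmetric 2×2 matrix with entries m₁₁, m₁₂, m₂₂. Then Up = Hp - Bp holds if and only if m₁₁ + m₁₂ = pᵀHp and m₁₂ + m₂₂ = -pᵀBp. -/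
/-!
Because `a ⬝ᵥ p = b ⬝ᵥ p = 1`, the vector `(a b)ᵀ p` is `(1, 1)`, so
`U p = (m₁₁ + m₁₂) a + (m₁₂ + m₂₂) b = ((m₁₁ + m₁₂)/pᵀHp) Hp + ((m₁₂ + m₂₂)/pᵀBp) Bp`.
Linear independence of `Hp, Bp` lets one compare coefficients with `Hp - Bp`.
-/

open Matrix

section

variable {R ι : Type*} [CommRing R] [Fintype ι]

theorem mulVec_pairCols_mul_mul_transpose (a b p : ι → R) (M : Matrix (Fin 2) (Fin 2) R) :
    ((Matrix.of fun i (j : Fin 2) => ![a i, b i] j) * M *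
        (Matrix.of fun i (j : Fin 2) => ![a i, b i] j)ᵀ) *ᵥ p =
      (M *ᵥ ![a ⬝ᵥ p, b ⬝ᵥ p]) 0 • a + (M *ᵥ ![a ⬝ᵥ p, b ⬝ᵥ p]) 1 • b := by
  have hcols : (Matrix.of fun i (j : Fin 2) => ![a i, b i] j) = (Matrix.of ![a, b])ᵀ := by
    ext i j; fin_cases j <;> rfl
  rw [hcols, transpose_transpose, ← mulVec_mulVec, ← mulVec_mulVec]
  ext i
  simp [mulVec, dotProduct, Fin.sum_univ_two, mul_comm]

theorem mulVec_symm_fin_two_one_one (m₁₁ m₁₂ m₂₂ : R) :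
    !![m₁₁, m₁₂; m₁₂, m₂₂] *ᵥ ![1, 1] = ![m₁₁ + m₁₂, m₁₂ + m₂₂] := by
  ext j; fin_cases j <;> simp

theorem inv_dotProduct_smul_dotProduct {K : Type*} [Field K] {p v : ι → K}
    (h : p ⬝ᵥ v ≠ 0) : (p ⬝ᵥ v)⁻¹ • v ⬝ᵥ p = 1 := by
  rw [smul_dotProduct, smul_eq_mul, dotProduct_comm v, inv_mul_cancel₀ h]

theorem LinearIndependent.smul_add_smul_eq_sub_iff {M : Type*} [AddCommGroup M] [Module R M]
    {x y : M} (h : LinearIndependent R ![x, y]) {s t : R} :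
    s • x + t • y = x - y ↔ s = 1 ∧ t = -1 := by
  rw [show x - y = (1 : R) • x + (-1 : R) • y by simp [sub_eq_add_neg]]
  exact ⟨h.eq_of_pair, by rintro ⟨rfl, rfl⟩; rfl⟩

end

/-- For `U = (a b) M (a b)ᵀ` with `a = Hp/(pᵀHp)`, `b = Bp/(pᵀBp)` and symmetric
2×2 `M`, the quasi-Newton condition `Up = Hp - Bp` holds iff
`m₁₁ + m₁₂ = pᵀHp` and `m₁₂ + m₂₂ = -pᵀBp`. -/
theorem qn_condition_iff {n : ℕ} (H B : Matrix (Fin n) (Fin n) ℝ) (p : Fin n → ℝ)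
    (hH : p ⬝ᵥ (H *ᵥ p) ≠ 0) (hB : p ⬝ᵥ (B *ᵥ p) ≠ 0)
    (hind : LinearIndependent ℝ ![H *ᵥ p, B *ᵥ p])
    (a b : Fin n → ℝ)
    (ha : a = (p ⬝ᵥ (H *ᵥ p))⁻¹ • (H *ᵥ p))
    (hb : b = (p ⬝ᵥ (B *ᵥ p))⁻¹ • (B *ᵥ p))
    (m₁₁ m₁₂ m₂₂ : ℝ)
    (U : Matrix (Fin n) (Fin n) ℝ)
    (hU : U = (Matrix.of fun i (j : Fin 2) => ![a i, b i] j) *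
        !![m₁₁, m₁₂; m₁₂, m₂₂] *
        (Matrix.of fun i (j : Fin 2) => ![a i, b i] j)ᵀ) :
    U *ᵥ p = H *ᵥ p - B *ᵥ p ↔
      m₁₁ + m₁₂ = p ⬝ᵥ (H *ᵥ p) ∧ m₁₂ + m₂₂ = -(p ⬝ᵥ (B *ᵥ p)) := by
  have hap : a ⬝ᵥ p = 1 := ha ▸ inv_dotProduct_smul_dotProduct hH
  have hbp : b ⬝ᵥ p = 1 := hb ▸ inv_dotProduct_smul_dotProduct hB
  have hUp : U *ᵥ p = ((m₁₁ + m₁₂) / p ⬝ᵥ (H *ᵥ p)) • (H *ᵥ p) +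
      ((m₁₂ + m₂₂) / p ⬝ᵥ (B *ᵥ p)) • (B *ᵥ p) := by
    rw [hU, mulVec_pairCols_mul_mul_transpose, hap, hbp, mulVec_symm_fin_two_one_one, ha, hb,
      smul_smul, smul_smul, div_eq_mul_inv, div_eq_mul_inv]
    rfl
  rw [hUp, hind.smul_add_smul_eq_sub_iff, div_eq_one_iff_eq hH, div_eq_iff hB, neg_one_mul]
end

section
/- Suppose a symmetric matrix U satisfies: range(U) ⊆ span{Hp, Bp}, U annihilates every vector orthogonal to both Hp and Bp, and Up = Hp - Bp, where Hp and Bp are linearly independent, pᵀHp ≠ 0, pᵀBp ≠ 0. Then there exists a scalar φ such that U = (Hp)(Hp)ᵀ/(pᵀHp) - (Bp)(Bp)ᵀ/(pᵀBp) + φ(pᵀBp)wwᵀ with w = Hp/(pᵀHp) - Bp/(pᵀBp), i.e. U belongs to the one-parameter Broyden family. -/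
/-!
Write `h = Hp` and `b = Bp`. Because `U` vanishes on the common orthogonal complement of `h` and
`b`, it is determined by its values on a dual pair `x₁, x₂` (`h ⬝ x₁ = b ⬝ x₂ = 1`,
`h ⬝ x₂ = b ⬝ x₁ = 0`), and these values lie in `span {h, b}`; so
`U = a hhᵀ + c hbᵀ + d bhᵀ + e bbᵀ`, and symmetry of `U` forces `c = d`.
The secant condition `Up = h - b` gives `a σ + c τ = 1` and `c σ + e τ = -1` with
`σ = pᵀHp`, `τ = pᵀBp`, which leaves `c` free; it is the Broyden parameter `φ = -c σ`.
-/

open Matrix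

/-- The vector `w = Hp/(pᵀHp) - Bp/(pᵀBp)`. -/
noncomputable def broydenW {n : ℕ} (H B : Matrix (Fin n) (Fin n) ℝ) (p : Fin n → ℝ) : Fin n → ℝ :=
  (p ⬝ᵥ (H *ᵥ p))⁻¹ • (H *ᵥ p) - (p ⬝ᵥ (B *ᵥ p))⁻¹ • (B *ᵥ p)

/-- The one-parameter Broyden family of updates
`U(φ) = HppᵀH/(pᵀHp) - BppᵀB/(pᵀBp) + φ(pᵀBp)wwᵀ`. -/
noncomputable def broydenUpdate {n : ℕ} (H B : Matrix (Fin n) (Fin n) ℝ) (p : Fin n → ℝ)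
    (φ : ℝ) : Matrix (Fin n) (Fin n) ℝ :=
  (p ⬝ᵥ (H *ᵥ p))⁻¹ • vecMulVec (H *ᵥ p) (H *ᵥ p) -
    (p ⬝ᵥ (B *ᵥ p))⁻¹ • vecMulVec (B *ᵥ p) (B *ᵥ p) +
    (φ * (p ⬝ᵥ (B *ᵥ p))) • vecMulVec (broydenW H B p) (broydenW H B p)

section DualPair

variable {ι m K : Type*} [Fintype ι] [Fintype m] [Field K]

theorem LinearIndependent.exists_dotProduct_eq {w : ι → m → K} (hw : LinearIndependent K w)
    (c : ι → K) : ∃ x : m → K, ∀ i, w i ⬝ᵥ x = c i := by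
  have hrank : (Matrix.of w).rank = Fintype.card ι := hw.rank_matrix
  have htop : LinearMap.range (Matrix.of w).mulVecLin = ⊤ :=
    Submodule.eq_top_of_finrank_eq <| by
      rw [← Matrix.rank, hrank, Module.finrank_fintype_fun_eq_card]
  obtain ⟨x, hx⟩ := LinearMap.range_eq_top.mp htop c
  exact ⟨x, fun i => congrFun hx i⟩

theorem LinearIndependent.exists_dotProduct_dual_pair {u v : m → K}
    (huv : LinearIndependent K ![u, v]) :
    ∃ x₁ x₂ : m → K, u ⬝ᵥ x₁ = 1 ∧ v ⬝ᵥ x₁ = 0 ∧ u ⬝ᵥ x₂ = 0 ∧ v ⬝ᵥ x₂ = 1 := by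
  obtain ⟨x₁, hx₁⟩ := huv.exists_dotProduct_eq ![1, 0]
  obtain ⟨x₂, hx₂⟩ := huv.exists_dotProduct_eq ![0, 1]
  exact ⟨x₁, x₂, hx₁ 0, hx₁ 1, hx₂ 0, hx₂ 1⟩

end DualPair

namespace Matrix

section CommRing

variable {m R : Type*} [Fintype m] [CommRing R] {U : Matrix m m R} {u v x₁ x₂ : m → R}

theorem eq_vecMulVec_add_vecMulVec_of_dual_pair
    (hnull : ∀ x, u ⬝ᵥ x = 0 → v ⬝ᵥ x = 0 → U *ᵥ x = 0)
    (h₁ : u ⬝ᵥ x₁ = 1) (h₂ : v ⬝ᵥ x₁ = 0) (h₃ : u ⬝ᵥ x₂ = 0) (h₄ : v ⬝ᵥ x₂ = 1) :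
    U = vecMulVec (U *ᵥ x₁) u + vecMulVec (U *ᵥ x₂) v := by
  refine ext_iff_mulVec.mpr fun x => ?_
  have hx : U *ᵥ (x - (u ⬝ᵥ x) • x₁ - (v ⬝ᵥ x) • x₂) = 0 := by
    apply hnull <;> simp [dotProduct_sub, dotProduct_smul, h₁, h₂, h₃, h₄]
  rw [mulVec_sub, mulVec_sub, mulVec_smul, mulVec_smul, sub_sub, sub_eq_zero] at hx
  simp only [add_mulVec, vecMulVec_mulVec, op_smul_eq_smul, hx]

theorem IsSymm.dotProduct_mulVec_comm (hU : U.IsSymm) (x y : m → R) :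
    x ⬝ᵥ (U *ᵥ y) = y ⬝ᵥ (U *ᵥ x) := by
  rw [dotProduct_mulVec, ← mulVec_transpose, hU.eq, dotProduct_comm]

theorem symm_combination_vecMulVec_mulVec (a c e : R) (u v x : m → R) :
    (a • vecMulVec u u + c • (vecMulVec u v + vecMulVec v u) + e • vecMulVec v v) *ᵥ x =
      (a * (u ⬝ᵥ x) + c * (v ⬝ᵥ x)) • u + (c * (u ⬝ᵥ x) + e * (v ⬝ᵥ x)) • v := by
  simp only [add_mulVec, smul_mulVec, vecMulVec_mulVec, op_smul_eq_smul]
  module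

end CommRing

theorem exists_eq_symm_combination_vecMulVec {m K : Type*} [Fintype m] [Field K]
    {U : Matrix m m K} {u v : m → K} (huv : LinearIndependent K ![u, v]) (hU : U.IsSymm)
    (hrange : LinearMap.range U.mulVecLin ≤ Submodule.span K {u, v})
    (hnull : ∀ x, u ⬝ᵥ x = 0 → v ⬝ᵥ x = 0 → U *ᵥ x = 0) :
    ∃ a c e : K, U = a • vecMulVec u u + c • (vecMulVec u v + vecMulVec v u) +
      e • vecMulVec v v := by
  obtain ⟨x₁, x₂, h₁, h₂, h₃, h₄⟩ := huv.exists_dotProduct_dual_pair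
  obtain ⟨a, c, hac⟩ := Submodule.mem_span_pair.mp (hrange ⟨x₁, rfl⟩)
  obtain ⟨d, e, hde⟩ := Submodule.mem_span_pair.mp (hrange ⟨x₂, rfl⟩)
  simp only [mulVecLin_apply] at hac hde
  have hcd : c = d := by
    have := hU.dotProduct_mulVec_comm x₂ x₁
    rw [← hac, ← hde] at this
    simpa [dotProduct_comm x₁, dotProduct_comm x₂, h₁, h₂, h₃, h₄] using this
  refine ⟨a, c, e, ?_⟩
  rw [eq_vecMulVec_add_vecMulVec_of_dual_pair hnull h₁ h₂ h₃ h₄, ← hac, ← hde, ← hcd]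
  simp only [add_vecMulVec, smul_vecMulVec]
  module

end Matrix

theorem symm_combination_eq_broydenUpdate {n : ℕ} (H B : Matrix (Fin n) (Fin n) ℝ)
    (p : Fin n → ℝ) (hH : p ⬝ᵥ (H *ᵥ p) ≠ 0) (hB : p ⬝ᵥ (B *ᵥ p) ≠ 0) {a c e : ℝ}
    (h₁ : a * (p ⬝ᵥ (H *ᵥ p)) + c * (p ⬝ᵥ (B *ᵥ p)) = 1)
    (h₂ : c * (p ⬝ᵥ (H *ᵥ p)) + e * (p ⬝ᵥ (B *ᵥ p)) = -1) :
    a • vecMulVec (H *ᵥ p) (H *ᵥ p) + c • (vecMulVec (H *ᵥ p) (B *ᵥ p) +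
      vecMulVec (B *ᵥ p) (H *ᵥ p)) + e • vecMulVec (B *ᵥ p) (B *ᵥ p) =
      broydenUpdate H B p (-(c * p ⬝ᵥ (H *ᵥ p))) := by
  have ha : a = (1 - c * p ⬝ᵥ (B *ᵥ p)) / p ⬝ᵥ (H *ᵥ p) := by field_simp; linarith
  have he : e = (-1 - c * p ⬝ᵥ (H *ᵥ p)) / p ⬝ᵥ (B *ᵥ p) := by field_simp; linarith
  ext i j
  simp only [broydenUpdate, broydenW, Matrix.add_apply, Matrix.sub_apply, Matrix.smul_apply,
    vecMulVec_apply, Pi.sub_apply, Pi.smul_apply, smul_eq_mul, ha, he]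
  field_simp
  ring

theorem broyden_complete_general {n : ℕ} (H B : Matrix (Fin n) (Fin n) ℝ)
    (p : Fin n → ℝ)
    (hH : p ⬝ᵥ (H *ᵥ p) ≠ 0) (hB : p ⬝ᵥ (B *ᵥ p) ≠ 0)
    (hind : LinearIndependent ℝ ![H *ᵥ p, B *ᵥ p])
    (U : Matrix (Fin n) (Fin n) ℝ) (hUsymm : U.IsSymm)
    (hrange : LinearMap.range U.mulVecLin ≤ Submodule.span ℝ {H *ᵥ p, B *ᵥ p})
    (hnull : ∀ x : Fin n → ℝ, (H *ᵥ p) ⬝ᵥ x = 0 → (B *ᵥ p) ⬝ᵥ x = 0 → U *ᵥ x = 0)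
    (hqn : U *ᵥ p = H *ᵥ p - B *ᵥ p) :
    ∃ φ : ℝ, U = broydenUpdate H B p φ := by
  obtain ⟨a, c, e, rfl⟩ := exists_eq_symm_combination_vecMulVec hind hUsymm hrange hnull
  rw [symm_combination_vecMulVec_mulVec, dotProduct_comm (H *ᵥ p), dotProduct_comm (B *ᵥ p)]
    at hqn
  obtain ⟨h₁, h₂⟩ := hind.eq_of_pair <| hqn.trans <|
    show H *ᵥ p - B *ᵥ p = (1 : ℝ) • (H *ᵥ p) + (-1 : ℝ) • (B *ᵥ p) by module
  exact ⟨_, symm_combination_eq_broydenUpdate H B p hH hB h₁ h₂⟩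

/-- A symmetric matrix with range in `span{Hp, Bp}`, annihilating the orthogonal
complement of `{Hp, Bp}`, and satisfying the quasi-Newton condition `Up = Hp - Bp`,
belongs to the one-parameter Broyden family. -/
theorem broyden_complete {n : ℕ} (H B : Matrix (Fin n) (Fin n) ℝ)
    (hHsymm : H.IsSymm) (hBsymm : B.IsSymm) (p : Fin n → ℝ)
    (hH : p ⬝ᵥ (H *ᵥ p) ≠ 0) (hB : p ⬝ᵥ (B *ᵥ p) ≠ 0)
    (hind : LinearIndependent ℝ ![H *ᵥ p, B *ᵥ p])
    (U : Matrix (Fin n) (Fin n) ℝ) (hUsymm : U.IsSymm)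
    (hrange : LinearMap.range U.mulVecLin ≤ Submodule.span ℝ {H *ᵥ p, B *ᵥ p})
    (hnull : ∀ x : Fin n → ℝ, (H *ᵥ p) ⬝ᵥ x = 0 → (B *ᵥ p) ⬝ᵥ x = 0 → U *ᵥ x = 0)
    (hqn : U *ᵥ p = H *ᵥ p - B *ᵥ p) :
    ∃ φ : ℝ, U = broydenUpdate H B p φ :=
  broyden_complete_general H B p hH hB hind U hUsymm hrange hnull hqn
end

section
/- With g = -Bp, g₊ = αHp + g, α = (pᵀBp)/(pᵀHp), the Broyden update U(φ) can be rewritten as U(φ) = (g g₊) N (g g₊)ᵀ where N is the symmetric 2×2 matrix with entries N₁₁ = pᵀHp/(pᵀBp)² - 1/(pᵀBp), N₁₂ = N₂₁ = -pᵀHp/(pᵀBp)², N₂₂ = pᵀHp/(pᵀBp)² + φ/(pᵀBp). -/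
open Matrix

/-!
Write `a = pᵀHp`, `b = pᵀBp`. The hypotheses give `Bp = -g` and `Hp = (a/b)(g₊ - g)`, hence
`w = g₊/b`. Substituting into `U(φ)` yields
`U(φ) = (a/b²)(g₊ - g)(g₊ - g)ᵀ - ggᵀ/b + (φ/b)g₊g₊ᵀ`,
and expanding the first term gives exactly the quadratic form of `N` in the columns `g, g₊`.
-/

theorem Matrix.twoCols_mul_mul_transpose {m R : Type*} [CommRing R] (x y : m → R)
    (a b c d : R) :
    (of fun i (j : Fin 2) => ![x i, y i] j) * !![a, b; c, d] *
        (of fun i (j : Fin 2) => ![x i, y i] j)ᵀ =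
      a • vecMulVec x x + b • vecMulVec x y + c • vecMulVec y x + d • vecMulVec y y := by
  ext i j
  simp only [mul_apply, of_apply, cons_val', cons_val_fin_one, Fin.sum_univ_two, cons_val_zero,
    cons_val_one, transpose_apply, add_apply, smul_apply, vecMulVec_apply, smul_eq_mul]
  ring

section Broyden

variable {n : ℕ} {H B : Matrix (Fin n) (Fin n) ℝ} {p g gp : Fin n → ℝ}

theorem broydenW_eq_inv_smul (hB : p ⬝ᵥ (B *ᵥ p) ≠ 0)
    (hgp : gp = ((p ⬝ᵥ (B *ᵥ p)) / (p ⬝ᵥ (H *ᵥ p))) • (H *ᵥ p) - B *ᵥ p) :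
    broydenW H B p = (p ⬝ᵥ (B *ᵥ p))⁻¹ • gp := by
  rw [broydenW, hgp, smul_sub, smul_smul, div_eq_mul_inv, inv_mul_cancel_left₀ hB]

theorem broydenUpdate_eq_gradients (hH : p ⬝ᵥ (H *ᵥ p) ≠ 0) (hB : p ⬝ᵥ (B *ᵥ p) ≠ 0)
    (hg : g = -(B *ᵥ p))
    (hgp : gp = ((p ⬝ᵥ (B *ᵥ p)) / (p ⬝ᵥ (H *ᵥ p))) • (H *ᵥ p) - B *ᵥ p) (φ : ℝ) :
    broydenUpdate H B p φ =
      (p ⬝ᵥ (H *ᵥ p) / (p ⬝ᵥ (B *ᵥ p)) ^ 2) • vecMulVec (gp - g) (gp - g) -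
        (p ⬝ᵥ (B *ᵥ p))⁻¹ • vecMulVec g g + (φ / p ⬝ᵥ (B *ᵥ p)) • vecMulVec gp gp := by
  rw [broydenUpdate, broydenW_eq_inv_smul hB hgp]
  set a := p ⬝ᵥ (H *ᵥ p)
  set b := p ⬝ᵥ (B *ᵥ p)
  have hv : B *ᵥ p = -g := by rw [hg, neg_neg]
  have hu : H *ᵥ p = (a / b) • (gp - g) := by
    rw [hgp, hv, sub_neg_eq_add, add_sub_cancel_right, smul_smul, div_mul_div_cancel₀ hB,
      div_self hH, one_smul]
  rw [hu, hv]
  simp only [smul_vecMulVec, vecMulVec_smul, neg_vecMulVec, vecMulVec_neg, neg_neg, smul_smul]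
  match_scalars <;> field_simp

end Broyden

theorem broyden_gradient_form_general {n : ℕ} (H B : Matrix (Fin n) (Fin n) ℝ)
    (p : Fin n → ℝ)
    (hH : p ⬝ᵥ (H *ᵥ p) ≠ 0) (hB : p ⬝ᵥ (B *ᵥ p) ≠ 0)
    (g gp : Fin n → ℝ) (hg : g = -(B *ᵥ p))
    (hgp : gp = ((p ⬝ᵥ (B *ᵥ p)) / (p ⬝ᵥ (H *ᵥ p))) • (H *ᵥ p) - B *ᵥ p)
    (φ : ℝ) :
    broydenUpdate H B p φ =
      (Matrix.of fun i (j : Fin 2) => ![g i, gp i] j) *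
        !![(p ⬝ᵥ (H *ᵥ p)) / (p ⬝ᵥ (B *ᵥ p)) ^ 2 - 1 / (p ⬝ᵥ (B *ᵥ p)),
            -((p ⬝ᵥ (H *ᵥ p)) / (p ⬝ᵥ (B *ᵥ p)) ^ 2);
           -((p ⬝ᵥ (H *ᵥ p)) / (p ⬝ᵥ (B *ᵥ p)) ^ 2),
            (p ⬝ᵥ (H *ᵥ p)) / (p ⬝ᵥ (B *ᵥ p)) ^ 2 + φ / (p ⬝ᵥ (B *ᵥ p))] *
        (Matrix.of fun i (j : Fin 2) => ![g i, gp i] j)ᵀ := by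
  rw [broydenUpdate_eq_gradients hH hB hg hgp, Matrix.twoCols_mul_mul_transpose]
  simp only [sub_vecMulVec, vecMulVec_sub]
  module

/-- The Broyden update `U(φ)` can be rewritten as `(g g₊) N (g g₊)ᵀ` with
`g = -Bp`, `g₊ = ((pᵀBp)/(pᵀHp))Hp - Bp` and `N` the indicated symmetric 2×2 matrix. -/
theorem broyden_gradient_form {n : ℕ} (H B : Matrix (Fin n) (Fin n) ℝ)
    (hHsymm : H.IsSymm) (hBsymm : B.IsSymm) (p : Fin n → ℝ)
    (hH : p ⬝ᵥ (H *ᵥ p) ≠ 0) (hB : p ⬝ᵥ (B *ᵥ p) ≠ 0)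
    (g gp : Fin n → ℝ) (hg : g = -(B *ᵥ p))
    (hgp : gp = ((p ⬝ᵥ (B *ᵥ p)) / (p ⬝ᵥ (H *ᵥ p))) • (H *ᵥ p) - B *ᵥ p)
    (φ : ℝ) :
    broydenUpdate H B p φ =
      (Matrix.of fun i (j : Fin 2) => ![g i, gp i] j) *
        !![(p ⬝ᵥ (H *ᵥ p)) / (p ⬝ᵥ (B *ᵥ p)) ^ 2 - 1 / (p ⬝ᵥ (B *ᵥ p)),
            -((p ⬝ᵥ (H *ᵥ p)) / (p ⬝ᵥ (B *ᵥ p)) ^ 2);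
           -((p ⬝ᵥ (H *ᵥ p)) / (p ⬝ᵥ (B *ᵥ p)) ^ 2),
            (p ⬝ᵥ (H *ᵥ p)) / (p ⬝ᵥ (B *ᵥ p)) ^ 2 + φ / (p ⬝ᵥ (B *ᵥ p))] *
        (Matrix.of fun i (j : Fin 2) => ![g i, gp i] j)ᵀ :=
  broyden_gradient_form_general H B p hH hB g gp hg hgp φ
end
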